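/- arXiv:2305.17657 — 2 statements merged into one kernel-verified Lean document; each statement's English description precedes it below -/
import Mathlib

section
/- Let T be a bounded linear operator on a complex Hilbert space H. Then w(T)⁴ ≤ ((1/2) w(T|T|) + (1/4) ‖T*T + TT*‖) · ((1/2) w(T*|T*|) + (1/4) ‖T*T + TT*‖), where |T| = (T*T)^{1/2}. -/
open scoped InnerProductSpace

variable {H : Type*} [NormedAddCommGroup H] [InnerProductSpace ℂ H] [CompleteSpace H]

/-- The numerical radius of a bounded linear operator. -/
noncomputable def numRadius (T : H →L[ℂ] H) : ℝ :=
  sSup {r : ℝ | ∃ x : H, ‖x‖ = 1 ∧ r = ‖⟪T x, x⟫_ℂ‖}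

/-- The absolute value `|T| = (T*T)^{1/2}` of an operator. -/
noncomputable def absOp (T : H →L[ℂ] H) : H →L[ℂ] H :=
  CFC.sqrt (ContinuousLinearMap.adjoint T * T)

set_option maxHeartbeats 1000000
set_option synthInstance.maxHeartbeats 1000000
set_option linter.unusedSectionVars false
set_option linter.unusedVariables false

section Aux

open ContinuousLinearMap (adjoint)

lemma aux_buzano (a b e : H) (he : ‖e‖ = 1) :
    ‖⟪a, e⟫_ℂ * ⟪e, b⟫_ℂ‖ ≤ (‖a‖ * ‖b‖ + ‖⟪a, b⟫_ℂ‖) / 2 := by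
  set v : H := ⟪e, a⟫_ℂ • e with hv
  have hvb : ⟪v, b⟫_ℂ = ⟪a, e⟫_ℂ * ⟪e, b⟫_ℂ := by
    rw [hv, inner_smul_left, ← inner_conj_symm a e]
  have hva : RCLike.re ⟪v, a⟫_ℂ = ‖⟪e, a⟫_ℂ‖ ^ 2 := by
    rw [hv, inner_smul_left, RCLike.conj_mul]
    norm_cast
  have hnv : ‖v‖ = ‖⟪e, a⟫_ℂ‖ := by rw [hv, norm_smul, he, mul_one]
  have hhalf : (2⁻¹ : ℂ) = ((2⁻¹ : ℝ) : ℂ) := by norm_num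
  have hkey : ‖v - (2⁻¹ : ℂ) • a‖ = ‖a‖ / 2 := by
    have h1 : ‖v - (2⁻¹ : ℂ) • a‖ ^ 2 = (‖a‖ / 2) ^ 2 := by
      have h2 : RCLike.re ((2⁻¹ : ℂ) * ⟪v, a⟫_ℂ) = 2⁻¹ * RCLike.re ⟪v, a⟫_ℂ := by
        simp [RCLike.re_to_complex, Complex.mul_re]
      have h3 : ‖(2⁻¹ : ℂ)‖ = 2⁻¹ := by norm_num
      rw [@norm_sub_sq ℂ, inner_smul_right, hnv, norm_smul, h2, hva, h3]
      ring
    nlinarith [norm_nonneg (v - (2⁻¹ : ℂ) • a), norm_nonneg a]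
  calc ‖⟪a, e⟫_ℂ * ⟪e, b⟫_ℂ‖ = ‖⟪v - (2⁻¹ : ℂ) • a, b⟫_ℂ + ⟪(2⁻¹ : ℂ) • a, b⟫_ℂ‖ := by
        rw [← inner_add_left, sub_add_cancel, hvb]
    _ ≤ ‖⟪v - (2⁻¹ : ℂ) • a, b⟫_ℂ‖ + ‖⟪(2⁻¹ : ℂ) • a, b⟫_ℂ‖ := norm_add_le _ _
    _ ≤ ‖v - (2⁻¹ : ℂ) • a‖ * ‖b‖ + ‖⟪(2⁻¹ : ℂ) • a, b⟫_ℂ‖ := by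
        gcongr; exact norm_inner_le_norm _ _
    _ ≤ (‖a‖ * ‖b‖ + ‖⟪a, b⟫_ℂ‖) / 2 := by
        rw [hkey, inner_smul_left, norm_mul]
        have : ‖(starRingEnd ℂ) (2⁻¹ : ℂ)‖ = 2⁻¹ := by simp
        rw [this]
        ring_nf
        rfl

lemma aux_intertwine_pow (X a b : H →L[ℂ] H) (h : X * a = b * X) (n : ℕ) :
    X * a ^ n = b ^ n * X := by
  induction n with
  | zero => simp
  | succ n ih => rw [pow_succ, pow_succ, ← mul_assoc, ih, mul_assoc, h, ← mul_assoc]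

lemma aux_intertwine_aeval (X a b : H →L[ℂ] H) (h : X * a = b * X) (p : Polynomial ℝ) :
    X * Polynomial.aeval a p = Polynomial.aeval b p * X := by
  induction p using Polynomial.induction_on with
  | C r => simp only [Polynomial.aeval_C]; exact (Algebra.commutes r X).symm
  | add p q hp hq => simp only [map_add, mul_add, add_mul, hp, hq]
  | monomial n r ih =>
      simp only [map_mul, Polynomial.aeval_C, map_pow, Polynomial.aeval_X]
      calc X * (algebraMap ℝ (H →L[ℂ] H) r * a ^ (n + 1))
          = algebraMap ℝ (H →L[ℂ] H) r * (X * a ^ (n + 1)) := by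
            rw [← mul_assoc, ← Algebra.commutes r X, mul_assoc]
        _ = algebraMap ℝ (H →L[ℂ] H) r * (b ^ (n + 1) * X) := by
            rw [aux_intertwine_pow X a b h]
        _ = algebraMap ℝ (H →L[ℂ] H) r * b ^ (n + 1) * X := by rw [mul_assoc]

lemma aux_intertwine_cfc [Nontrivial H] (X a b : H →L[ℂ] H)
    (ha : IsSelfAdjoint a) (hb : IsSelfAdjoint b)
    (h : X * a = b * X) (f : ℝ → ℝ) (hf : Continuous f) :
    X * cfc f a = cfc f b * X := by
  set R : ℝ := max ‖a‖ ‖b‖ with hR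
  have hsp : ∀ (c : H →L[ℂ] H), ‖c‖ ≤ R → ∀ t ∈ spectrum ℝ c, t ∈ Set.Icc (-R) R := by
    intro c hc t ht
    have := spectrum.norm_le_norm_of_mem ht
    rw [Real.norm_eq_abs] at this
    have : |t| ≤ R := this.trans hc
    exact Set.mem_Icc.mpr (abs_le.mp this)
  have key : ∀ ε : ℝ, 0 < ε → ‖X * cfc f a - cfc f b * X‖ ≤ ε * (2 * ‖X‖) := by
    intro ε hε
    obtain ⟨p, hp⟩ := exists_polynomial_near_of_continuousOn (-R) R f hf.continuousOn ε hε
    have hcfc : ∀ (c : H →L[ℂ] H), IsSelfAdjoint c → ‖c‖ ≤ R →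
        ‖cfc f c - cfc p.eval c‖ ≤ ε := by
      intro c hsa hc
      rw [← cfc_sub f p.eval c hf.continuousOn p.continuousOn_aeval]
      refine norm_cfc_le hε.le fun t ht => ?_
      have h1 := hp t (hsp c hc t ht)
      rw [Real.norm_eq_abs, abs_sub_comm]
      exact h1.le
    have hpa : X * cfc p.eval a = cfc p.eval b * X := by
      rw [cfc_polynomial p a, cfc_polynomial p b]
      exact aux_intertwine_aeval X a b h p
    have hsplit : X * cfc f a - cfc f b * X
        = X * (cfc f a - cfc p.eval a) + (cfc p.eval b - cfc f b) * X := by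
      rw [mul_sub, sub_mul, hpa]; abel
    rw [hsplit]
    calc ‖X * (cfc f a - cfc p.eval a) + (cfc p.eval b - cfc f b) * X‖
        ≤ ‖X * (cfc f a - cfc p.eval a)‖ + ‖(cfc p.eval b - cfc f b) * X‖ := norm_add_le _ _
      _ ≤ ‖X‖ * ε + ε * ‖X‖ := by
          refine add_le_add ((norm_mul_le _ _).trans ?_) ((norm_mul_le _ _).trans ?_)
          · exact mul_le_mul_of_nonneg_left (hcfc a ha (le_max_left _ _)) (norm_nonneg X)
          · refine mul_le_mul_of_nonneg_right ?_ (norm_nonneg X)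
            rw [norm_sub_rev]
            exact hcfc b hb (le_max_right _ _)
      _ = ε * (2 * ‖X‖) := by ring
  have h0 : ‖X * cfc f a - cfc f b * X‖ ≤ 0 := by
    refine le_of_forall_pos_le_add fun δ hδ => ?_
    have hk := key (δ / (2 * ‖X‖ + 1)) (by positivity)
    calc ‖X * cfc f a - cfc f b * X‖ ≤ δ / (2 * ‖X‖ + 1) * (2 * ‖X‖) := hk
      _ ≤ δ := by
          rw [div_mul_eq_mul_div, div_le_iff₀ (by positivity)]
          nlinarith [norm_nonneg X]
      _ = 0 + δ := by ring
  exact sub_eq_zero.mp (norm_le_zero_iff.mp h0)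

lemma aux_sqrt_eq_cfc (S : H →L[ℂ] H) (hS : 0 ≤ S) :
    CFC.sqrt S = cfc (fun t : ℝ => Real.sqrt |t|) S := by
  have hc : Continuous (fun t : ℝ => Real.sqrt |t|) :=
    Real.continuous_sqrt.comp continuous_abs
  refine CFC.sqrt_unique ?_ (cfc_nonneg fun t _ => Real.sqrt_nonneg _)
  rw [← cfc_mul _ _ S hc.continuousOn hc.continuousOn]
  have h1 : cfc (fun t : ℝ => Real.sqrt |t| * Real.sqrt |t|) S = cfc (fun t : ℝ => t) S := by
    refine cfc_congr fun t ht => ?_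
    rw [Real.mul_self_sqrt (abs_nonneg t), abs_of_nonneg (spectrum_nonneg_of_nonneg hS ht)]
  rw [h1, cfc_id' ℝ S]

lemma aux_sqrt_sqrt_eq_cfc (S : H →L[ℂ] H) (hS : 0 ≤ S) :
    CFC.sqrt (CFC.sqrt S) = cfc (fun t : ℝ => Real.sqrt (Real.sqrt |t|)) S := by
  have hc : Continuous (fun t : ℝ => Real.sqrt (Real.sqrt |t|)) :=
    Real.continuous_sqrt.comp (Real.continuous_sqrt.comp continuous_abs)
  refine CFC.sqrt_unique ?_ (cfc_nonneg fun t _ => Real.sqrt_nonneg _)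
  rw [← cfc_mul _ _ S hc.continuousOn hc.continuousOn]
  have h1 : cfc (fun t : ℝ => Real.sqrt (Real.sqrt |t|) * Real.sqrt (Real.sqrt |t|)) S
      = cfc (fun t : ℝ => Real.sqrt |t|) S := by
    refine cfc_congr fun t _ => ?_
    rw [Real.mul_self_sqrt (Real.sqrt_nonneg _)]
  rw [h1, ← aux_sqrt_eq_cfc S hS]

lemma aux_re_inner_nonneg (S : H →L[ℂ] H) (hS : 0 ≤ S) (x : H) :
    0 ≤ (⟪S x, x⟫_ℂ).re := by
  have hpos := (ContinuousLinearMap.nonneg_iff_isPositive S).mp hS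
  have := hpos.inner_nonneg_left x
  simpa using (Complex.le_def.mp this).1

lemma aux_norm_inner_eq_re (S : H →L[ℂ] H) (hS : 0 ≤ S) (x : H) :
    ‖⟪S x, x⟫_ℂ‖ = (⟪S x, x⟫_ℂ).re := by
  have hpos := (ContinuousLinearMap.nonneg_iff_isPositive S).mp hS
  have hsa := hpos.isSelfAdjoint
  have h1 : ⟪S x, x⟫_ℂ = ⟪x, S x⟫_ℂ := by
    conv_lhs => rw [← ContinuousLinearMap.isSelfAdjoint_iff'.mp hsa]
    exact ContinuousLinearMap.adjoint_inner_left S x x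
  have him : (⟪S x, x⟫_ℂ).im = 0 := by
    have h2 : (starRingEnd ℂ) ⟪S x, x⟫_ℂ = ⟪S x, x⟫_ℂ := by
      rw [inner_conj_symm]; exact h1.symm
    have := congrArg Complex.im h2
    simp only [Complex.conj_im] at this
    linarith
  have hre := aux_re_inner_nonneg S hS x
  rw [Complex.norm_def, Complex.normSq_apply, him]
  rw [show (⟪S x, x⟫_ℂ).re * (⟪S x, x⟫_ℂ).re + 0 * 0 = (⟪S x, x⟫_ℂ).re ^ 2 by ring]
  exact Real.sqrt_sq hre

lemma aux_norm_sq_sqrt_apply (S : H →L[ℂ] H) (hS : 0 ≤ S) (x : H) :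
    ‖CFC.sqrt S x‖ ^ 2 = (⟪S x, x⟫_ℂ).re := by
  set b := CFC.sqrt S with hb
  have hbnn : (0 : H →L[ℂ] H) ≤ b := CFC.sqrt_nonneg _
  have hbsa := ((ContinuousLinearMap.nonneg_iff_isPositive b).mp hbnn).isSelfAdjoint
  have hadj : adjoint b = b := ContinuousLinearMap.isSelfAdjoint_iff'.mp hbsa
  have hmul : b * b = S := CFC.sqrt_mul_sqrt_self S hS
  have h1 : ⟪b x, b x⟫_ℂ = ⟪S x, x⟫_ℂ := by
    have h := ContinuousLinearMap.adjoint_inner_right b (b x) x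
    rw [hadj] at h
    rw [h, show b (b x) = (b * b) x from rfl, hmul]
  have h2 : RCLike.re ⟪b x, b x⟫_ℂ = ‖b x‖ ^ 2 := inner_self_eq_norm_sq (b x)
  rw [← h1]
  simpa [RCLike.re_to_complex] using h2.symm

lemma aux_norm_absOp_apply (T : H →L[ℂ] H) (x : H) : ‖absOp T x‖ = ‖T x‖ := by
  have hS : (0 : H →L[ℂ] H) ≤ adjoint T * T := by
    rw [← ContinuousLinearMap.star_eq_adjoint]; exact star_mul_self_nonneg T
  have h1 : ‖absOp T x‖ ^ 2 = (⟪(adjoint T * T) x, x⟫_ℂ).re :=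
    aux_norm_sq_sqrt_apply _ hS x
  have h2 : ⟪(adjoint T * T) x, x⟫_ℂ = ⟪T x, T x⟫_ℂ := by
    rw [show (adjoint T * T) x = adjoint T (T x) from rfl]
    exact ContinuousLinearMap.adjoint_inner_left T x (T x)
  have h3 : RCLike.re ⟪T x, T x⟫_ℂ = ‖T x‖ ^ 2 := inner_self_eq_norm_sq (T x)
  rw [h2] at h1
  simp only [RCLike.re_to_complex] at h3
  rw [h3] at h1
  nlinarith [norm_nonneg (absOp T x), norm_nonneg (T x)]

lemma aux_mixed_schwarz [Nontrivial H] (T : H →L[ℂ] H) (x : H) :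
    ‖⟪T x, x⟫_ℂ‖ ^ 2 ≤ (⟪absOp T x, x⟫_ℂ).re * (⟪absOp (adjoint T) x, x⟫_ℂ).re := by
  set S1 : H →L[ℂ] H := adjoint T * T with hS1def
  set S2 : H →L[ℂ] H := T * adjoint T with hS2def
  have hS1 : (0 : H →L[ℂ] H) ≤ S1 := by
    rw [hS1def, ← ContinuousLinearMap.star_eq_adjoint]; exact star_mul_self_nonneg T
  have hS2 : (0 : H →L[ℂ] H) ≤ S2 := by
    rw [hS2def, ← ContinuousLinearMap.star_eq_adjoint]; exact mul_star_self_nonneg T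
  have hS1sa : IsSelfAdjoint S1 :=
    ((ContinuousLinearMap.nonneg_iff_isPositive S1).mp hS1).isSelfAdjoint
  have hS2sa : IsSelfAdjoint S2 :=
    ((ContinuousLinearMap.nonneg_iff_isPositive S2).mp hS2).isSelfAdjoint
  have habs1 : absOp T = CFC.sqrt S1 := rfl
  have habs2 : absOp (adjoint T) = CFC.sqrt S2 := by
    rw [absOp, ContinuousLinearMap.adjoint_adjoint]
  set q : ℝ → ℝ := fun t => Real.sqrt (Real.sqrt |t|) with hqdef
  have hqc : Continuous q := Real.continuous_sqrt.comp (Real.continuous_sqrt.comp continuous_abs)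
  have hqnn : ∀ t, 0 ≤ q t := fun t => Real.sqrt_nonneg _
  set A : H →L[ℂ] H := CFC.sqrt S1 with hAdef
  set B : H →L[ℂ] H := CFC.sqrt S2 with hBdef
  have hA : (0 : H →L[ℂ] H) ≤ A := CFC.sqrt_nonneg _
  have hB : (0 : H →L[ℂ] H) ≤ B := CFC.sqrt_nonneg _
  set P : H →L[ℂ] H := CFC.sqrt A with hPdef
  set Q : H →L[ℂ] H := CFC.sqrt B with hQdef
  have hP : (0 : H →L[ℂ] H) ≤ P := CFC.sqrt_nonneg _
  have hQ : (0 : H →L[ℂ] H) ≤ Q := CFC.sqrt_nonneg _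
  have hPcfc : P = cfc q S1 := aux_sqrt_sqrt_eq_cfc S1 hS1
  have hQcfc : Q = cfc q S2 := aux_sqrt_sqrt_eq_cfc S2 hS2
  have hcomm : T * S1 = S2 * T := by rw [hS1def, hS2def, mul_assoc]
  have hTP : T * P = Q * T := by
    rw [hPcfc, hQcfc]; exact aux_intertwine_cfc T S1 S2 hS1sa hS2sa hcomm q hqc
  have hQadj : adjoint Q = Q :=
    ContinuousLinearMap.isSelfAdjoint_iff'.mp
      ((ContinuousLinearMap.nonneg_iff_isPositive Q).mp hQ).isSelfAdjoint
  have hTz : ∀ z : H, ‖T z‖ = ‖A z‖ := by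
    intro z
    have h1 : ‖A z‖ ^ 2 = (⟪S1 z, z⟫_ℂ).re := aux_norm_sq_sqrt_apply S1 hS1 z
    have h2 : ⟪S1 z, z⟫_ℂ = ⟪T z, T z⟫_ℂ := by
      rw [hS1def, show (adjoint T * T) z = adjoint T (T z) from rfl]
      exact ContinuousLinearMap.adjoint_inner_left T z (T z)
    have h3 : RCLike.re ⟪T z, T z⟫_ℂ = ‖T z‖ ^ 2 := inner_self_eq_norm_sq (T z)
    simp only [RCLike.re_to_complex] at h3
    rw [h2, h3] at h1
    nlinarith [norm_nonneg (A z), norm_nonneg (T z)]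
  have main : ∀ ε : ℝ, 0 < ε → ‖⟪T x, x⟫_ℂ‖ ≤ ‖P x‖ * ‖Q x‖ + ε * (‖P x‖ * ‖x‖) := by
    intro ε hε
    set g : ℝ → ℝ := fun t => (q t + ε)⁻¹ with hgdef
    have hne : ∀ t : ℝ, q t + ε ≠ 0 := fun t =>
      ne_of_gt (add_pos_of_nonneg_of_pos (hqnn t) hε)
    have hgc : Continuous g := (hqc.add continuous_const).inv₀ hne
    set Rε : H →L[ℂ] H := cfc g S1 with hRedef
    have key1 : P * Rε + ε • Rε = 1 := by
      rw [hPcfc, hRedef, ← cfc_mul q g S1 hqc.continuousOn hgc.continuousOn,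
        ← cfc_smul ε g S1 hgc.continuousOn,
        ← cfc_add S1 (fun x => q x * g x) (fun x => ε • g x) ((hqc.mul hgc).continuousOn) ((by fun_prop : Continuous (fun x => ε • g x)).continuousOn)]
      have heq : (fun t : ℝ => q t * g t + ε • g t) = fun _ : ℝ => (1 : ℝ) := by
        funext t
        rw [hgdef, smul_eq_mul]
        field_simp
        exact div_self (hne t)
      rw [heq, cfc_const_one ℝ S1]
    have key2 : ‖P * Rε‖ ≤ 1 := by
      rw [hPcfc, hRedef, ← cfc_mul q g S1 hqc.continuousOn hgc.continuousOn]
      refine norm_cfc_le zero_le_one fun t _ => ?_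
      rw [Real.norm_eq_abs, hgdef]
      have h1 : (0:ℝ) < q t + ε := add_pos_of_nonneg_of_pos (hqnn t) hε
      rw [abs_of_nonneg (by positivity), ← div_eq_mul_inv, div_le_one h1]
      linarith
    have key3 : A * Rε = (P * Rε) * P := by
      have hsc : Continuous (fun t : ℝ => Real.sqrt |t|) :=
        Real.continuous_sqrt.comp continuous_abs
      rw [hAdef, aux_sqrt_eq_cfc S1 hS1, hPcfc, hRedef,
        ← cfc_mul q g S1 hqc.continuousOn hgc.continuousOn,
        ← cfc_mul (fun x => q x * g x) q S1 ((hqc.mul hgc).continuousOn) hqc.continuousOn,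
        ← cfc_mul (fun t : ℝ => Real.sqrt |t|) g S1 hsc.continuousOn hgc.continuousOn]
      refine cfc_congr fun t _ => ?_
      have : q t * q t = Real.sqrt |t| := Real.mul_self_sqrt (Real.sqrt_nonneg _)
      calc Real.sqrt |t| * g t = (q t * q t) * g t := by rw [this]
        _ = q t * g t * q t := by ring
    have key4 : T = Q * (T * Rε) + ε • (T * Rε) := by
      conv_lhs => rw [← mul_one T, ← key1]
      rw [mul_add, ← mul_assoc, hTP, mul_assoc, mul_smul_comm]
    have key5 : ⟪T x, x⟫_ℂ = ⟪(T * Rε) x, Q x⟫_ℂ + (ε : ℂ) * ⟪(T * Rε) x, x⟫_ℂ := by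
      conv_lhs => rw [key4]
      rw [ContinuousLinearMap.add_apply, inner_add_left]
      congr 1
      · rw [show (Q * (T * Rε)) x = Q ((T * Rε) x) from rfl]
        conv_lhs => rw [← hQadj]
        exact ContinuousLinearMap.adjoint_inner_left Q x ((T * Rε) x)
      · rw [ContinuousLinearMap.smul_apply, RCLike.real_smul_eq_coe_smul (K := ℂ),
          inner_smul_left]
        simp
    have h6 : ‖(T * Rε) x‖ ≤ ‖P x‖ := by
      have h61 : (T * Rε) x = T (Rε x) := rfl
      have h62 : ‖T (Rε x)‖ = ‖A (Rε x)‖ := hTz (Rε x)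
      have h63 : A (Rε x) = ((P * Rε) * P) x := by
        rw [show ((P * Rε) * P) x = (A * Rε) x by rw [key3], show (A * Rε) x = A (Rε x) from rfl]
      have h64 : ‖((P * Rε) * P) x‖ = ‖(P * Rε) (P x)‖ := rfl
      calc ‖(T * Rε) x‖ = ‖(P * Rε) (P x)‖ := by rw [h61, h62, h63, h64]
        _ ≤ ‖P * Rε‖ * ‖P x‖ := (P * Rε).le_opNorm (P x)
        _ ≤ 1 * ‖P x‖ := mul_le_mul_of_nonneg_right key2 (norm_nonneg _)
        _ = ‖P x‖ := one_mul _
    calc ‖⟪T x, x⟫_ℂ‖ ≤ ‖⟪(T * Rε) x, Q x⟫_ℂ‖ + ‖(ε : ℂ) * ⟪(T * Rε) x, x⟫_ℂ‖ := by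
          rw [key5]; exact norm_add_le _ _
      _ ≤ ‖(T * Rε) x‖ * ‖Q x‖ + ε * (‖(T * Rε) x‖ * ‖x‖) := by
          refine add_le_add (norm_inner_le_norm _ _) ?_
          rw [norm_mul]
          have : ‖(ε : ℂ)‖ = ε := by
            rw [Complex.norm_real, Real.norm_eq_abs, abs_of_pos hε]
          rw [this]
          exact mul_le_mul_of_nonneg_left (norm_inner_le_norm _ _) hε.le
      _ ≤ ‖P x‖ * ‖Q x‖ + ε * (‖P x‖ * ‖x‖) := by
          have := norm_nonneg (Q x); have := norm_nonneg x
          gcongr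
  have main2 : ‖⟪T x, x⟫_ℂ‖ ≤ ‖P x‖ * ‖Q x‖ := by
    refine le_of_forall_pos_le_add fun δ hδ => ?_
    have hm := main (δ / (‖P x‖ * ‖x‖ + 1)) (by positivity)
    have h7 : δ / (‖P x‖ * ‖x‖ + 1) * (‖P x‖ * ‖x‖) ≤ δ := by
      rw [div_mul_eq_mul_div, div_le_iff₀ (by positivity)]
      nlinarith [mul_nonneg (norm_nonneg (P x)) (norm_nonneg x)]
    linarith
  have hsq := pow_le_pow_left₀ (norm_nonneg _) main2 2
  calc ‖⟪T x, x⟫_ℂ‖ ^ 2 ≤ (‖P x‖ * ‖Q x‖) ^ 2 := hsq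
    _ = ‖P x‖ ^ 2 * ‖Q x‖ ^ 2 := by ring
    _ = (⟪absOp T x, x⟫_ℂ).re * (⟪absOp (adjoint T) x, x⟫_ℂ).re := by
        rw [hPdef, hQdef, aux_norm_sq_sqrt_apply A hA x, aux_norm_sq_sqrt_apply B hB x,
          habs1, habs2]

lemma aux_numRadius_bddAbove (T : H →L[ℂ] H) :
    BddAbove {r : ℝ | ∃ x : H, ‖x‖ = 1 ∧ r = ‖⟪T x, x⟫_ℂ‖} := by
  refine ⟨‖T‖, fun r hr => ?_⟩
  obtain ⟨x, hx, rfl⟩ := hr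
  calc ‖⟪T x, x⟫_ℂ‖ ≤ ‖T x‖ * ‖x‖ := norm_inner_le_norm _ _
    _ ≤ ‖T‖ * ‖x‖ * ‖x‖ := by
        have := T.le_opNorm x
        nlinarith [norm_nonneg x]
    _ = ‖T‖ := by rw [hx]; ring

lemma aux_le_numRadius (T : H →L[ℂ] H) {x : H} (hx : ‖x‖ = 1) :
    ‖⟪T x, x⟫_ℂ‖ ≤ numRadius T :=
  le_csSup (aux_numRadius_bddAbove T) ⟨x, hx, rfl⟩

lemma aux_numRadius_nonneg (T : H →L[ℂ] H) : 0 ≤ numRadius T :=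
  Real.sSup_nonneg (by rintro r ⟨x, hx, rfl⟩; positivity)

lemma aux_numRadius_le (T : H →L[ℂ] H) {c : ℝ} (hc : 0 ≤ c)
    (h : ∀ x : H, ‖x‖ = 1 → ‖⟪T x, x⟫_ℂ‖ ≤ c) : numRadius T ≤ c :=
  Real.sSup_le (by rintro r ⟨x, hx, rfl⟩; exact h x hx) hc

lemma aux_keybound (T : H →L[ℂ] H) (x : H) (hx : ‖x‖ = 1) :
    (⟪absOp T x, x⟫_ℂ).re * ‖⟪T x, x⟫_ℂ‖ ≤
      (1 / 2) * numRadius (T * absOp T) +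
        (1 / 4) * ‖adjoint T * T + T * adjoint T‖ := by
  set A : H →L[ℂ] H := absOp T with hAdef
  have hAnn : (0 : H →L[ℂ] H) ≤ A := CFC.sqrt_nonneg _
  have hbz := aux_buzano (A x) (adjoint T x) x hx
  have e1 : ⟪x, adjoint T x⟫_ℂ = ⟪T x, x⟫_ℂ := ContinuousLinearMap.adjoint_inner_right T x x
  have e2 : ⟪A x, adjoint T x⟫_ℂ = ⟪(T * A) x, x⟫_ℂ := by
    rw [ContinuousLinearMap.adjoint_inner_right T (A x) x]; rfl
  have e3 : ‖A x‖ = ‖T x‖ := aux_norm_absOp_apply T x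
  have e4 : ‖⟪A x, x⟫_ℂ‖ = (⟪A x, x⟫_ℂ).re := aux_norm_inner_eq_re A hAnn x
  have e5 : ‖T x‖ ^ 2 + ‖adjoint T x‖ ^ 2 ≤ ‖adjoint T * T + T * adjoint T‖ := by
    set S : H →L[ℂ] H := adjoint T * T + T * adjoint T with hSdef
    have h1 : ⟪S x, x⟫_ℂ = ⟪T x, T x⟫_ℂ + ⟪adjoint T x, adjoint T x⟫_ℂ := by
      rw [hSdef, ContinuousLinearMap.add_apply, inner_add_left]
      congr 1
      · exact ContinuousLinearMap.adjoint_inner_left T x (T x)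
      · exact (ContinuousLinearMap.adjoint_inner_right T (adjoint T x) x).symm
    have h2 : ‖T x‖ ^ 2 + ‖adjoint T x‖ ^ 2 = (⟪S x, x⟫_ℂ).re := by
      have h3 : RCLike.re ⟪T x, T x⟫_ℂ = ‖T x‖ ^ 2 := inner_self_eq_norm_sq (T x)
      have h4 : RCLike.re ⟪adjoint T x, adjoint T x⟫_ℂ = ‖adjoint T x‖ ^ 2 :=
        inner_self_eq_norm_sq (adjoint T x)
      simp only [RCLike.re_to_complex] at h3 h4
      rw [h1, Complex.add_re, h3, h4]
    rw [h2]
    calc (⟪S x, x⟫_ℂ).re ≤ ‖⟪S x, x⟫_ℂ‖ := Complex.re_le_norm _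
      _ ≤ ‖S x‖ * ‖x‖ := norm_inner_le_norm _ _
      _ ≤ ‖S‖ * ‖x‖ * ‖x‖ := by have := S.le_opNorm x; nlinarith [norm_nonneg x]
      _ = ‖S‖ := by rw [hx]; ring
  have e6 : ‖⟪(T * A) x, x⟫_ℂ‖ ≤ numRadius (T * A) := aux_le_numRadius _ hx
  rw [e1, e2, norm_mul, e4, e3] at hbz
  nlinarith [sq_nonneg (‖T x‖ - ‖adjoint T x‖), norm_nonneg (⟪T x, x⟫_ℂ),
    aux_re_inner_nonneg A hAnn x]

end Aux

theorem thm4 (T : H →L[ℂ] H) :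
    (numRadius T) ^ 4 ≤
      ((1 / 2) * numRadius (T * absOp T) + (1 / 4) * ‖ContinuousLinearMap.adjoint T * T + T * ContinuousLinearMap.adjoint T‖) *
      ((1 / 2) * numRadius (ContinuousLinearMap.adjoint T * absOp (ContinuousLinearMap.adjoint T)) + (1 / 4) * ‖ContinuousLinearMap.adjoint T * T + T * ContinuousLinearMap.adjoint T‖) := by
  have n1 := aux_numRadius_nonneg (T * absOp T)
  have n2 := aux_numRadius_nonneg
    (ContinuousLinearMap.adjoint T * absOp (ContinuousLinearMap.adjoint T))
  have n3 : (0:ℝ) ≤ ‖ContinuousLinearMap.adjoint T * T + T * ContinuousLinearMap.adjoint T‖ :=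
    norm_nonneg _
  rcases subsingleton_or_nontrivial H with hH | hH
  · have h0 : numRadius T = 0 := by
      rw [numRadius]
      convert Real.sSup_empty
      rw [Set.eq_empty_iff_forall_notMem]
      rintro r ⟨x, hx, -⟩
      rw [Subsingleton.elim x 0, norm_zero] at hx
      exact one_ne_zero hx.symm
    rw [h0]
    have : (0:ℝ) ^ 4 = 0 := by norm_num
    rw [this]
    exact mul_nonneg (by linarith) (by linarith)
  · set N : ℝ := ‖ContinuousLinearMap.adjoint T * T + T * ContinuousLinearMap.adjoint T‖
      with hN
    set A' : ℝ := (1/2) * numRadius (T * absOp T) + (1/4) * N with hA'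
    set B' : ℝ := (1/2) * numRadius
        (ContinuousLinearMap.adjoint T * absOp (ContinuousLinearMap.adjoint T)) + (1/4) * N
      with hB'
    have hA'nn : 0 ≤ A' := by rw [hA']; linarith
    have hB'nn : 0 ≤ B' := by rw [hB']; linarith
    set s : ℝ := Real.sqrt (Real.sqrt (A' * B')) with hs
    have hsnn : 0 ≤ s := Real.sqrt_nonneg _
    have hs4 : s ^ 4 = A' * B' := by
      have h1 : s ^ 2 = Real.sqrt (A' * B') := Real.sq_sqrt (Real.sqrt_nonneg _)
      have h2 : (Real.sqrt (A' * B')) ^ 2 = A' * B' := Real.sq_sqrt (mul_nonneg hA'nn hB'nn)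
      calc s ^ 4 = (s ^ 2) ^ 2 := by ring
        _ = A' * B' := by rw [h1, h2]
    have hw : numRadius T ≤ s := by
      refine aux_numRadius_le T hsnn fun x hx => ?_
      have hmnn : (0:ℝ) ≤ ‖⟪T x, x⟫_ℂ‖ := norm_nonneg _
      have hms := aux_mixed_schwarz T x
      have hka := aux_keybound T x hx
      have hkb := aux_keybound (ContinuousLinearMap.adjoint T) x hx
      have em : ‖⟪ContinuousLinearMap.adjoint T x, x⟫_ℂ‖ = ‖⟪T x, x⟫_ℂ‖ := by
        rw [ContinuousLinearMap.adjoint_inner_left T x x, ← inner_conj_symm x (T x),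
          RCLike.norm_conj]
      rw [ContinuousLinearMap.adjoint_adjoint, em] at hkb
      have hNc : ‖T * ContinuousLinearMap.adjoint T + ContinuousLinearMap.adjoint T * T‖
          = N := by rw [hN, add_comm]
      rw [hNc] at hkb
      have hpa : 0 ≤ (⟪absOp T x, x⟫_ℂ).re := aux_re_inner_nonneg _ (CFC.sqrt_nonneg _) x
      have hpb : 0 ≤ (⟪absOp (ContinuousLinearMap.adjoint T) x, x⟫_ℂ).re :=
        aux_re_inner_nonneg _ (CFC.sqrt_nonneg _) x
      have h5 := mul_le_mul_of_nonneg_right hms (mul_nonneg hmnn hmnn)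
      have h6 := mul_le_mul hka hkb (mul_nonneg hpb hmnn) hA'nn
      have h4 : ‖⟪T x, x⟫_ℂ‖ ^ 4 ≤ A' * B' := by
        calc ‖⟪T x, x⟫_ℂ‖ ^ 4
            = ‖⟪T x, x⟫_ℂ‖ ^ 2 * (‖⟪T x, x⟫_ℂ‖ * ‖⟪T x, x⟫_ℂ‖) := by ring
          _ ≤ ((⟪absOp T x, x⟫_ℂ).re * (⟪absOp (ContinuousLinearMap.adjoint T) x, x⟫_ℂ).re)
              * (‖⟪T x, x⟫_ℂ‖ * ‖⟪T x, x⟫_ℂ‖) := h5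
          _ = ((⟪absOp T x, x⟫_ℂ).re * ‖⟪T x, x⟫_ℂ‖)
              * ((⟪absOp (ContinuousLinearMap.adjoint T) x, x⟫_ℂ).re * ‖⟪T x, x⟫_ℂ‖) := by
              ring
          _ ≤ A' * B' := h6
      by_contra hcon
      push_neg at hcon
      have hlt := pow_lt_pow_left₀ hcon hsnn (by norm_num : (4:ℕ) ≠ 0)
      rw [hs4] at hlt
      linarith
    calc numRadius T ^ 4 ≤ s ^ 4 := pow_le_pow_left₀ (aux_numRadius_nonneg T) hw 4
      _ = A' * B' := hs4
end

section
/- Let T be a bounded linear operator on a complex Hilbert space H with Tⁿ = 0 for some integer n ≥ 2. Then w(T)ⁿ ≤ ∑_{k=1}^{n-1} (1/2^k) ‖Tᵏ‖ ‖T‖^{n-k} ≤ (1 − 1/2^{n-1}) ‖T‖ⁿ. -/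
/-!
Buzano's inequality `|⟪a, x⟫⟪x, b⟫| ≤ (‖a‖‖b‖ + |⟪a, b⟫|) / 2` for a unit vector `x`, applied to
`a = Tᵏ x` and `b = T† x`, gives
`|⟪Tᵏ x, x⟫| |⟪T x, x⟫| ≤ (‖Tᵏ‖‖T‖ + |⟪Tᵏ⁺¹ x, x⟫|) / 2`.
Chaining these for `k = 1, …, n - 1` bounds `|⟪T x, x⟫|ⁿ` by the middle sum plus a multiple of
`|⟪Tⁿ x, x⟫| = 0`. The last inequality is `‖Tᵏ‖ ≤ ‖T‖ᵏ` and a geometric sum.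
-/

open scoped InnerProductSpace

variable {H : Type*} [NormedAddCommGroup H] [InnerProductSpace ℂ H] [CompleteSpace H]

open Finset

theorem sum_Icc_one_div_two_pow (m : ℕ) : ∑ k ∈ Icc 1 m, (1 / 2 ^ k : ℝ) = 1 - 1 / 2 ^ m := by
  induction m with
  | zero => simp
  | succ m ih =>
    rw [sum_Icc_succ_top (by omega), ih, pow_succ]
    ring

theorem sum_Icc_mul_pow_sub_mul_add {R : Type*} [CommSemiring R] (a : ℕ → R) (r : R) (m : ℕ) :
    (∑ k ∈ Icc 1 m, a k * r ^ (m + 1 - k)) * r + a (m + 1) * r =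
      ∑ k ∈ Icc 1 (m + 1), a k * r ^ (m + 2 - k) := by
  rw [sum_Icc_succ_top (by omega), sum_mul, Nat.add_sub_add_left]
  congr 1
  · refine sum_congr rfl fun k hk => ?_
    rw [mul_assoc, ← pow_succ, show m + 2 - k = m + 1 - k + 1 by grind]
  · simp

theorem sum_Icc_one_div_two_pow_mul_norm_pow_le {A : Type*} [SeminormedRing A] (a : A) (m : ℕ) :
    ∑ k ∈ Icc 1 m, (1 / 2 ^ k) * ‖a ^ k‖ * ‖a‖ ^ (m + 1 - k) ≤ (1 - 1 / 2 ^ m) * ‖a‖ ^ (m + 1) :=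
  calc ∑ k ∈ Icc 1 m, (1 / 2 ^ k) * ‖a ^ k‖ * ‖a‖ ^ (m + 1 - k)
      ≤ ∑ k ∈ Icc 1 m, (1 / 2 ^ k) * ‖a‖ ^ k * ‖a‖ ^ (m + 1 - k) := by
        gcongr with k hk
        exact norm_pow_le' a (mem_Icc.mp hk).1
    _ = ∑ k ∈ Icc 1 m, (1 / 2 ^ k) * ‖a‖ ^ (m + 1) := by
        refine sum_congr rfl fun k hk => ?_
        rw [mul_assoc, ← pow_add, Nat.add_sub_cancel' (by grind)]
    _ = (1 - 1 / 2 ^ m) * ‖a‖ ^ (m + 1) := by rw [← sum_mul, sum_Icc_one_div_two_pow]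

section InnerProductSpace

variable {𝕜 E : Type*} [RCLike 𝕜] [NormedAddCommGroup E] [InnerProductSpace 𝕜 E]

/-- Buzano's inequality. The reflection of `a` in the line `𝕜 ∙ x` has the norm of `a`, and its
inner product with `b` is `2 ⟪a, x⟫ ⟪x, b⟫ - ⟪a, b⟫`. -/
theorem norm_inner_mul_norm_inner_le {x : E} (hx : ‖x‖ = 1) (a b : E) :
    ‖⟪a, x⟫_𝕜‖ * ‖⟪x, b⟫_𝕜‖ ≤ (‖a‖ * ‖b‖ + ‖⟪a, b⟫_𝕜‖) / 2 := by
  set R := (𝕜 ∙ x).reflection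
  have hR : ⟪R a, b⟫_𝕜 = 2 * (⟪a, x⟫_𝕜 * ⟪x, b⟫_𝕜) - ⟪a, b⟫_𝕜 := by
    rw [Submodule.reflection_apply, Submodule.starProjection_unit_singleton 𝕜 hx, inner_sub_left,
      two_smul, inner_add_left, inner_smul_left, inner_conj_symm]
    ring
  have : 2 * (‖⟪a, x⟫_𝕜‖ * ‖⟪x, b⟫_𝕜‖) ≤ ‖a‖ * ‖b‖ + ‖⟪a, b⟫_𝕜‖ := calc
    2 * (‖⟪a, x⟫_𝕜‖ * ‖⟪x, b⟫_𝕜‖) = ‖⟪R a, b⟫_𝕜 + ⟪a, b⟫_𝕜‖ := by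
      rw [hR, sub_add_cancel, norm_mul, norm_mul, RCLike.norm_two]
    _ ≤ ‖R a‖ * ‖b‖ + ‖⟪a, b⟫_𝕜‖ :=
      (norm_add_le _ _).trans (by gcongr; exact norm_inner_le_norm _ _)
    _ = ‖a‖ * ‖b‖ + ‖⟪a, b⟫_𝕜‖ := by rw [LinearIsometryEquiv.norm_map]
  linarith

theorem norm_inner_apply_self_le (T : E →L[𝕜] E) {x : E} (hx : ‖x‖ = 1) : ‖⟪T x, x⟫_𝕜‖ ≤ ‖T‖ :=
  calc ‖⟪T x, x⟫_𝕜‖ ≤ ‖T x‖ * ‖x‖ := norm_inner_le_norm _ _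
    _ ≤ ‖T‖ := by simpa [hx] using T.le_opNorm x

theorem norm_inner_pow_apply_mul_le [CompleteSpace E] (T : E →L[𝕜] E) {x : E} (hx : ‖x‖ = 1)
    (k : ℕ) :
    ‖⟪(T ^ k) x, x⟫_𝕜‖ * ‖⟪T x, x⟫_𝕜‖ ≤ (‖T ^ k‖ * ‖T‖ + ‖⟪(T ^ (k + 1)) x, x⟫_𝕜‖) / 2 := by
  have h := norm_inner_mul_norm_inner_le (𝕜 := 𝕜) hx ((T ^ k) x) (T.adjoint x)
  rw [ContinuousLinearMap.adjoint_inner_right, ContinuousLinearMap.adjoint_inner_right,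
    ← mul_apply_eq_comp, ← pow_succ'] at h
  refine h.trans ?_
  gcongr
  · simpa [hx] using (T ^ k).le_opNorm x
  · simpa [hx] using T.adjoint.le_opNorm x

theorem norm_inner_apply_self_pow_le [CompleteSpace E] (T : E →L[𝕜] E) {x : E} (hx : ‖x‖ = 1)
    (m : ℕ) :
    ‖⟪T x, x⟫_𝕜‖ ^ (m + 1) ≤ ∑ k ∈ Icc 1 m, (1 / 2 ^ k) * ‖T ^ k‖ * ‖T‖ ^ (m + 1 - k)
      + (1 / 2 ^ m) * ‖⟪(T ^ (m + 1)) x, x⟫_𝕜‖ := by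
  induction m with
  | zero => simp
  | succ m ih =>
    calc ‖⟪T x, x⟫_𝕜‖ ^ (m + 2) = ‖⟪T x, x⟫_𝕜‖ ^ (m + 1) * ‖⟪T x, x⟫_𝕜‖ := pow_succ _ _
      _ ≤ (∑ k ∈ Icc 1 m, (1 / 2 ^ k) * ‖T ^ k‖ * ‖T‖ ^ (m + 1 - k)) * ‖⟪T x, x⟫_𝕜‖
          + (1 / 2 ^ m) * (‖⟪(T ^ (m + 1)) x, x⟫_𝕜‖ * ‖⟪T x, x⟫_𝕜‖) :=
        (mul_le_mul_of_nonneg_right ih (norm_nonneg _)).trans_eq (by ring)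
      _ ≤ (∑ k ∈ Icc 1 m, (1 / 2 ^ k) * ‖T ^ k‖ * ‖T‖ ^ (m + 1 - k)) * ‖T‖
          + (1 / 2 ^ m) * ((‖T ^ (m + 1)‖ * ‖T‖ + ‖⟪(T ^ (m + 2)) x, x⟫_𝕜‖) / 2) := by
        gcongr
        · exact norm_inner_apply_self_le T hx
        · exact norm_inner_pow_apply_mul_le T hx (m + 1)
      _ = ∑ k ∈ Icc 1 (m + 1), (1 / 2 ^ k) * ‖T ^ k‖ * ‖T‖ ^ (m + 2 - k)
          + (1 / 2 ^ (m + 1)) * ‖⟪(T ^ (m + 2)) x, x⟫_𝕜‖ := by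
        rw [← sum_Icc_mul_pow_sub_mul_add, pow_succ]
        ring

end InnerProductSpace

section NumericalRadius

variable {E : Type*} [NormedAddCommGroup E] [InnerProductSpace ℂ E]

theorem numRadius_nonneg (T : E →L[ℂ] E) : 0 ≤ numRadius T :=
  Real.sSup_nonneg fun _ ⟨_, _, hr⟩ => hr ▸ norm_nonneg _

theorem numRadius_le {T : E →L[ℂ] E} {c : ℝ} (hc : 0 ≤ c)
    (h : ∀ x : E, ‖x‖ = 1 → ‖⟪T x, x⟫_ℂ‖ ≤ c) : numRadius T ≤ c :=
  Real.sSup_le (fun _ ⟨x, hx, hr⟩ => hr ▸ h x hx) hc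

theorem numRadius_pow_le {T : E →L[ℂ] E} {n : ℕ} (hn : n ≠ 0) {c : ℝ} (hc : 0 ≤ c)
    (h : ∀ x : E, ‖x‖ = 1 → ‖⟪T x, x⟫_ℂ‖ ^ n ≤ c) : numRadius T ^ n ≤ c := by
  have hn' : (0 : ℝ) < n := by positivity
  have hroot : numRadius T ≤ c ^ (n : ℝ)⁻¹ := numRadius_le (by positivity) fun x hx =>
    (Real.le_rpow_inv_iff_of_pos (norm_nonneg _) hc hn').2 (by simpa using h x hx)
  simpa using (Real.le_rpow_inv_iff_of_pos (numRadius_nonneg T) hc hn').1 hroot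

end NumericalRadius

theorem nilpotent_bound (T : H →L[ℂ] H) (n : ℕ) (hn : 2 ≤ n) (h : T ^ n = 0) :
    (numRadius T) ^ n ≤ ∑ k ∈ Finset.Icc 1 (n - 1), (1 / 2 ^ k) * ‖T ^ k‖ * ‖T‖ ^ (n - k) ∧
    ∑ k ∈ Finset.Icc 1 (n - 1), (1 / 2 ^ k) * ‖T ^ k‖ * ‖T‖ ^ (n - k) ≤
      (1 - 1 / 2 ^ (n - 1)) * ‖T‖ ^ n := by
  obtain ⟨m, rfl⟩ : ∃ m, n = m + 1 := ⟨n - 1, by omega⟩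
  rw [Nat.add_sub_cancel]
  refine ⟨numRadius_pow_le (by omega) (by positivity) fun x hx => ?_,
    sum_Icc_one_div_two_pow_mul_norm_pow_le T m⟩
  simpa [h] using norm_inner_apply_self_pow_le T hx m
end
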